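/- Let w be a weight with ∑_{n≥1} w(n) < ∞ and M_w < ∞, and let T : ℓ¹ → ℓ¹ be the continuous linear operator satisfying (T x)(n) = (w(n)/n) ∑_{k=1}^n x(k)/w(k) for all x ∈ ℓ¹ and n ≥ 1. Then for every integer r ≥ 2 the iterates T^m e_r converge to 0 in the norm of ℓ¹ as m → ∞, where e_r is the r-th canonical unit vector of ℓ¹. -/

import Mathlib

/- Index `n : ℕ` is the paper's `n + 1`; thus `r ≥ 1` here is the paper's `r ≥ 2`. -/

open Filter Topology

noncomputable section

abbrev ellOne : Type := lp (fun _ : ℕ => ℂ) 1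

def IsCesaroOp (v w : ℕ → ℝ) (T : ellOne →L[ℂ] ellOne) : Prop :=
  ∀ (x : ellOne) (n : ℕ),
    (T x : ∀ _ : ℕ, ℂ) n
      = ((w n / (n + 1) : ℝ) : ℂ) * ∑ k ∈ Finset.range (n + 1), (x : ∀ _ : ℕ, ℂ) k / ((v k : ℝ) : ℂ)

def Mvw (v w : ℕ → ℝ) : ENNReal :=
  ⨆ n : ℕ, ENNReal.ofReal (1 / v n) * ∑' k : ℕ, ENNReal.ofReal (w (n + k) / (n + k + 1))

/-!
Write `e_r = (w(k) a(k))_k` with `a = e_r / w(r)`. The transferred operator acts on such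
vectors through the plain Cesàro mean `𝒞` of `a`, so `(T^m e_r)(n) = w(n) (𝒞^m a)(n)`.
The means `𝒞^m a` stay between `0` and `1 / w(r)`, which gives the summable majorant
`w(n) / w(r)`. Since `a` vanishes at the first index (`r ≥ 2`), `a(n) ≤ c n` for some `c`,
and such a bound is halved by `𝒞` because `∑_{k ≤ n} k = n(n+1)/2`; hence `(𝒞^m a)(n) → 0`
for each `n`. Dominated convergence for series finishes the proof.
-/

lemma Finset.sum_range_succ_natCast_id (n : ℕ) :
    ∑ k ∈ Finset.range (n + 1), (k : ℝ) = n * (n + 1) / 2 := by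
  induction n with
  | zero => simp
  | succ n ih => rw [Finset.sum_range_succ, ih]; push_cast; ring

def cesaroMean (a : ℕ → ℝ) (n : ℕ) : ℝ :=
  (∑ k ∈ Finset.range (n + 1), a k) / (n + 1)

namespace cesaroMean

variable {a : ℕ → ℝ} {c : ℝ}

lemma nonneg (ha : ∀ n, 0 ≤ a n) (n : ℕ) : 0 ≤ cesaroMean a n :=
  div_nonneg (Finset.sum_nonneg fun k _ => ha k) (by positivity)

lemma le_of_le (ha : ∀ n, a n ≤ c) (n : ℕ) : cesaroMean a n ≤ c := by
  rw [cesaroMean, div_le_iff₀ (by positivity)]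
  calc ∑ k ∈ Finset.range (n + 1), a k ≤ ∑ _k ∈ Finset.range (n + 1), c :=
        Finset.sum_le_sum fun k _ => ha k
    _ = c * (n + 1) := by simp [mul_comm]

lemma le_half_mul (ha : ∀ n, a n ≤ c * n) (n : ℕ) :
    cesaroMean a n ≤ c / 2 * n := by
  rw [cesaroMean, div_le_iff₀ (by positivity)]
  calc ∑ k ∈ Finset.range (n + 1), a k ≤ ∑ k ∈ Finset.range (n + 1), c * k :=
        Finset.sum_le_sum fun k _ => ha k
    _ = c / 2 * n * (n + 1) := by rw [← Finset.mul_sum, Finset.sum_range_succ_natCast_id]; ring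

lemma iterate_nonneg (ha : ∀ n, 0 ≤ a n) (m n : ℕ) : 0 ≤ cesaroMean^[m] a n := by
  induction m generalizing n with
  | zero => exact ha n
  | succ m ih => rw [Function.iterate_succ_apply']; exact nonneg ih n

lemma iterate_le (ha : ∀ n, a n ≤ c) (m n : ℕ) : cesaroMean^[m] a n ≤ c := by
  induction m generalizing n with
  | zero => exact ha n
  | succ m ih => rw [Function.iterate_succ_apply']; exact le_of_le ih n

lemma iterate_le_half_pow_mul (ha : ∀ n, a n ≤ c * n) (m n : ℕ) :
    cesaroMean^[m] a n ≤ c * (1 / 2) ^ m * n := by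
  induction m generalizing n with
  | zero => simpa using ha n
  | succ m ih =>
    rw [Function.iterate_succ_apply']
    calc cesaroMean (cesaroMean^[m] a) n ≤ c * (1 / 2) ^ m / 2 * n :=
          le_half_mul ih n
      _ = c * (1 / 2) ^ (m + 1) * n := by ring

lemma tendsto_iterate_zero (ha₀ : ∀ n, 0 ≤ a n) (ha : ∀ n, a n ≤ c * n)
    (n : ℕ) : Tendsto (fun m => cesaroMean^[m] a n) atTop (𝓝 0) := by
  have hlim : Tendsto (fun m : ℕ => c * (1 / 2 : ℝ) ^ m * n) atTop (𝓝 0) := by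
    simpa using ((tendsto_pow_atTop_nhds_zero_of_lt_one (by norm_num) (by norm_num :
      (1 / 2 : ℝ) < 1)).const_mul c).mul_const (n : ℝ)
  exact tendsto_of_tendsto_of_tendsto_of_le_of_le tendsto_const_nhds hlim
    (fun m => iterate_nonneg ha₀ m n) (fun m => iterate_le_half_pow_mul ha m n)

end cesaroMean

lemma lp.norm_eq_tsum_norm {α : Type*} {E : α → Type*} [∀ i, NormedAddCommGroup (E i)]
    (f : lp E 1) : ‖f‖ = ∑' i, ‖f i‖ := by
  simp [lp.norm_eq_tsum_rpow (p := 1) (by norm_num) f]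

namespace IsCesaroOp

variable {v w : ℕ → ℝ} {T : ellOne →L[ℂ] ellOne}

lemma apply_eq (hT : IsCesaroOp v w T) (hv : ∀ n, v n ≠ 0) {x : ellOne} {a : ℕ → ℝ}
    (hx : ∀ k, (x : ℕ → ℂ) k = ((v k * a k : ℝ) : ℂ)) (n : ℕ) :
    (T x : ℕ → ℂ) n = ((w n * cesaroMean a n : ℝ) : ℂ) := by
  have hterm : ∀ k, (x : ℕ → ℂ) k / ((v k : ℝ) : ℂ) = ((a k : ℝ) : ℂ) := fun k => by
    rw [hx k, Complex.ofReal_mul, mul_div_cancel_left₀ _ (Complex.ofReal_ne_zero.mpr (hv k))]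
  simp only [hT x n, hterm, cesaroMean]
  push_cast
  ring

lemma pow_apply_eq (hT : IsCesaroOp w w T) (hw : ∀ n, w n ≠ 0) {x : ellOne} {a : ℕ → ℝ}
    (hx : ∀ k, (x : ℕ → ℂ) k = ((w k * a k : ℝ) : ℂ)) (m n : ℕ) :
    ((T ^ m) x : ℕ → ℂ) n = ((w n * cesaroMean^[m] a n : ℝ) : ℂ) := by
  induction m generalizing n with
  | zero => simpa using hx n
  | succ m ih =>
    rw [pow_succ', Function.iterate_succ_apply']
    exact hT.apply_eq hw ih n

lemma pow_single_apply_eq (hT : IsCesaroOp w w T) (hw : ∀ n, 0 < w n) (r m n : ℕ) :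
    ((T ^ m) (lp.single 1 r (1 : ℂ)) : ℕ → ℂ) n
      = ((w n * cesaroMean^[m] (Pi.single r (w r)⁻¹) n : ℝ) : ℂ) := by
  refine hT.pow_apply_eq (fun n => (hw n).ne') (fun k => ?_) m n
  by_cases h : k = r
  · subst h; simp [(hw k).ne']
  · simp [h]

end IsCesaroOp

lemma Pi.single_le_div_mul {r : ℕ} {c : ℝ} (hc : 0 ≤ c) (hr : r ≠ 0) (n : ℕ) :
    (Pi.single r c : ℕ → ℝ) n ≤ c / r * n := by
  by_cases h : n = r
  · simp [h, div_mul_cancel₀ c (Nat.cast_ne_zero.mpr hr)]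
  · simp only [Pi.single_apply, h, if_false]; positivity

theorem iterates_on_basis_tend_to_zero_general (w : ℕ → ℝ)
    (hw : ∀ n, 0 < w n)
    (hsum : Summable w)
    (T : ellOne →L[ℂ] ellOne) (hT : IsCesaroOp w w T) :
    ∀ r : ℕ, 1 ≤ r →
      Tendsto (fun m : ℕ => (T ^ m) (lp.single 1 r (1 : ℂ))) atTop (nhds 0) := by
  intro r hr
  set c := (w r)⁻¹
  have hc : 0 ≤ c := inv_nonneg.mpr (hw r).le
  set a : ℕ → ℝ := Pi.single r c
  have ha₀ (n : ℕ) : 0 ≤ a n := by by_cases h : n = r <;> simp [a, h, hc]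
  have ha_le (n : ℕ) : a n ≤ c := by by_cases h : n = r <;> simp [a, h, hc]
  have hterm_nonneg (m n : ℕ) : 0 ≤ w n * cesaroMean^[m] a n :=
    mul_nonneg (hw n).le (cesaroMean.iterate_nonneg ha₀ m n)
  have hnorm (m n : ℕ) : ‖((T ^ m) (lp.single 1 r (1 : ℂ)) : ℕ → ℂ) n‖
      = w n * cesaroMean^[m] a n := by
    rw [hT.pow_single_apply_eq hw, Complex.norm_real, Real.norm_of_nonneg (hterm_nonneg m n)]
  have hpointwise (n : ℕ) :
      Tendsto (fun m => w n * cesaroMean^[m] a n) atTop (𝓝 0) := by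
    simpa using (cesaroMean.tendsto_iterate_zero ha₀
      (Pi.single_le_div_mul hc (by omega)) n).const_mul (w n)
  have hdominated : ∀ᶠ m in atTop, ∀ n, ‖w n * cesaroMean^[m] a n‖ ≤ w n * c :=
    Eventually.of_forall fun m n => by
      rw [Real.norm_of_nonneg (hterm_nonneg m n)]
      exact mul_le_mul_of_nonneg_left (cesaroMean.iterate_le ha_le m n) (hw n).le
  rw [tendsto_zero_iff_norm_tendsto_zero]
  simpa only [lp.norm_eq_tsum_norm, hnorm, tsum_zero] using
    tendsto_tsum_of_dominated_convergence (hsum.mul_right c) hpointwise hdominated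

theorem iterates_on_basis_tend_to_zero (w : ℕ → ℝ)
    (hw : ∀ n, 0 < w n) (hwb : ∃ C, ∀ n, w n ≤ C)
    (hsum : Summable w) (hM : Mvw w w ≠ ⊤)
    (T : ellOne →L[ℂ] ellOne) (hT : IsCesaroOp w w T) :
    ∀ r : ℕ, 1 ≤ r →
      Tendsto (fun m : ℕ => (T ^ m) (lp.single 1 r (1 : ℂ))) atTop (nhds 0) :=
  iterates_on_basis_tend_to_zero_general w hw hsum T hT

end
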